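/- Let C₁ and C₂ be classes of decidable languages, each recursively presentable and closed under finite variants, and let A₁ ∉ C₁, A₂ ∉ C₂ be decidable. Then there exists a language A with A ∉ C₁, A ∉ C₂, and A many-one reducible (by a computable function, no time bound required) to A₁ ⊕ A₂. (Weakened Uniform Diagonalization Theorem, without the linear-time bound on the reduction.) -/

import Mathlib

/-- Words over the binary alphabet. -/
abbrev Word := List Bool
/-- A language is a set of words. -/
abbrev Lang := Set Word

/-- The identity finite encoding of words over `Bool`. -/
def wordEncoding : Computability.Encoding Word Bool where
  encode := id
  decode := fun l => some l
  decode_encode := fun _ => rfl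

/-- Finite encoding of `Bool` as a one-letter word. -/
def boolEncoding : Computability.Encoding Bool Bool where
  encode := fun b => [b]
  decode := fun l => l.head?
  decode_encode := fun _ => rfl

/-- `f` is computable in linear time on a (multi-stack) Turing machine. -/
def LinTimeComputable (f : Word → Word) : Prop :=
  ∃ tm : Turing.TM2ComputableInTime wordEncoding.encode wordEncoding.encode f,
    ∃ c : ℕ, ∀ n, tm.time n ≤ c * n + c

/-- A `Bool`-valued function on words computable in linear time. -/
def LinTimeComputableBool (g : Word → Bool) : Prop :=
  ∃ tm : Turing.TM2ComputableInTime wordEncoding.encode boolEncoding.encode g,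
    ∃ c : ℕ, ∀ n, tm.time n ≤ c * n + c

/-- Linear-time many-one reducibility. -/
def leLIN (A B : Lang) : Prop :=
  ∃ f : Word → Word, LinTimeComputable f ∧ ∀ x, x ∈ A ↔ f x ∈ B

/-- A language is decidable (by a total computable decision procedure). -/
def DecidableLang (A : Lang) : Prop :=
  ∃ g : Word → Bool, Computable g ∧ A = {w | g w = true}

/-- A class of languages is recursively presentable: there is a computable
enumeration of total deciders whose accepted languages are exactly the class. -/
def RecPresentable (C : Set Lang) : Prop :=
  ∃ e : ℕ → Word → Bool, Computable₂ e ∧ C = {L | ∃ i, L = {w | e i w = true}}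

/-- Closure under finite variants. -/
def ClosedFinVariants (C : Set Lang) : Prop :=
  ∀ A B : Lang, A ∈ C → (symmDiff A B).Finite → B ∈ C

/-- The tagged disjoint union `A₁ ⊕ A₂`, with pairing `⟨w, b⟩ = b :: w`. -/
def DisjUnion (A₁ A₂ : Lang) : Lang :=
  {x | ∃ w ∈ A₁, x = false :: w} ∪ {x | ∃ w ∈ A₂, x = true :: w}

/-- Deterministic linear time: languages decided by a linear-time TM. -/
def DLIN : Set Lang := {A | ∃ g : Word → Bool, LinTimeComputableBool g ∧ A = {w | g w = true}}

namespace UDiag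

/-- Bounded existential on Bool predicates. -/
def bexists (p : ℕ → Bool) : ℕ → Bool
  | 0 => false
  | n + 1 => bexists p n || p n

theorem bexists_iff (p : ℕ → Bool) (n : ℕ) :
    bexists p n = true ↔ ∃ m, m < n ∧ p m = true := by
  induction n with
  | zero => simp [bexists]
  | succ n ih =>
    simp only [bexists, Bool.or_eq_true, ih]
    constructor
    · rintro (⟨m, hm, h⟩ | h)
      · exact ⟨m, by omega, h⟩
      · exact ⟨n, by omega, h⟩
    · rintro ⟨m, hm, h⟩
      rcases Nat.lt_or_ge m n with h' | h'
      · exact Or.inl ⟨m, h', h⟩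
      · exact Or.inr (by rwa [show m = n by omega] at h)

theorem bexists_comp {α : Type*} [Primcodable α] {p : α → ℕ → Bool} {b : α → ℕ}
    (hp : Computable₂ p) (hb : Computable b) :
    Computable fun a => bexists (p a) (b a) := by
  have h : Computable₂ fun (a : α) (q : ℕ × Bool) => q.2 || p a q.1 := by
    have := Computable.cond (Computable.snd.comp Computable.snd) (Computable.const true)
      (hp.comp Computable.fst (Computable.fst.comp Computable.snd))
    exact Computable₂.mk (this.of_eq fun x => by cases h : x.2.2 <;> simp [h])
  have := Computable.nat_rec hb (Computable.const false) h
  refine this.of_eq fun a => ?_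
  induction b a with
  | zero => simp [bexists]
  | succ n ih => simp [bexists, ← ih]

end UDiag

namespace UDiag

def wordOf (m j : ℕ) : Word := (List.range m).map fun t => Nat.bodd (j / 2 ^ t)

@[simp] theorem wordOf_length (m j : ℕ) : (wordOf m j).length = m := by simp [wordOf]

theorem wordOf_succ (m j : ℕ) : wordOf (m + 1) j = Nat.bodd j :: wordOf m (j / 2) := by
  simp only [wordOf, List.range_succ_eq_map, List.map_cons, List.map_map, pow_zero, Nat.div_one]
  congr 1
  apply List.map_congr_left
  intro t _
  simp only [Function.comp_apply, Nat.div_div_eq_div_mul]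
  rw [pow_succ']

theorem exists_wordOf (w : Word) : ∃ j, j < 2 ^ w.length ∧ wordOf w.length j = w := by
  induction w with
  | nil => exact ⟨0, by simp, by simp [wordOf]⟩
  | cons b t ih =>
    obtain ⟨j, hj, hw⟩ := ih
    refine ⟨2 * j + b.toNat, ?_, ?_⟩
    · have hb : b.toNat ≤ 1 := Bool.toNat_le b
      have : (2 : ℕ) ^ (b :: t).length = 2 ^ t.length * 2 := by
        simp [pow_succ]
      omega
    · rw [List.length_cons, wordOf_succ]
      have h2 : (2 * j + b.toNat) / 2 = j := by cases b <;> simp <;> omega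
      have h1 : Nat.bodd (2 * j + b.toNat) = b := by
        cases b <;> simp [Nat.bodd_add, Nat.bodd_mul]
      rw [h1, h2, hw]

theorem pow2_primrec : Primrec (fun m : ℕ => 2 ^ m) := by
  have := Primrec.nat_iterate (Primrec.id (α := ℕ)) (Primrec.const 1)
    ((Primrec.nat_mul.comp (Primrec.const 2) Primrec.snd).to₂ (α := ℕ))
  have key : ∀ m : ℕ, (fun b : ℕ => 2 * b)^[m] 1 = 2 ^ m := by
    intro m
    induction m with
    | zero => simp
    | succ n ih => rw [Function.iterate_succ_apply', ih, pow_succ]; ring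
  refine this.of_eq fun m => ?_
  simpa using key m

theorem wordOf_primrec : Primrec₂ wordOf := by
  have h : Primrec₂ fun (p : ℕ × ℕ) (t : ℕ) => Nat.bodd (p.2 / 2 ^ t) :=
    (Primrec.nat_bodd.comp (Primrec.nat_div.comp (Primrec.snd.comp Primrec.fst)
      (pow2_primrec.comp Primrec.snd))).to₂
  exact Primrec₂.mk (Primrec.list_map (Primrec.list_range.comp Primrec.fst) h)

end UDiag

namespace UDiag

def dfun (g : Word → Bool) (e : ℕ → Word → Bool) (i m : ℕ) : Bool :=
  bexists (fun j => xor (g (wordOf m j)) (e i (wordOf m j))) (2 ^ m)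

theorem dfun_iff (g : Word → Bool) (e : ℕ → Word → Bool) (i m : ℕ) :
    dfun g e i m = true ↔ ∃ w : Word, w.length = m ∧ g w ≠ e i w := by
  rw [dfun, bexists_iff]
  constructor
  · rintro ⟨j, _, h⟩
    refine ⟨wordOf m j, wordOf_length m j, ?_⟩
    intro hne
    rw [hne] at h
    simp at h
  · rintro ⟨w, hl, h⟩
    obtain ⟨j, hj, hw⟩ := exists_wordOf w
    rw [hl] at hj hw
    refine ⟨j, hj, ?_⟩
    rw [hw]
    cases hg : g w <;> cases he : e i w <;> simp_all

theorem dfun_comp {g : Word → Bool} {e : ℕ → Word → Bool}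
    (hg : Computable g) (he : Computable₂ e) : Computable₂ (dfun g e) := by
  have hwo : Computable₂ wordOf := wordOf_primrec.to_comp
  have hw : Computable fun x : (ℕ × ℕ) × ℕ => wordOf x.1.2 x.2 :=
    hwo.comp (Computable.snd.comp Computable.fst) Computable.snd
  have hxg : Computable fun x : (ℕ × ℕ) × ℕ => g (wordOf x.1.2 x.2) := hg.comp hw
  have hxe : Computable fun x : (ℕ × ℕ) × ℕ => e x.1.1 (wordOf x.1.2 x.2) :=
    he.comp (Computable.fst.comp Computable.fst) hw
  have hp : Computable₂ fun (p : ℕ × ℕ) (j : ℕ) =>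
      xor (g (wordOf p.2 j)) (e p.1 (wordOf p.2 j)) := by
    have := Computable.cond hxg
      (Computable.cond hxe (Computable.const false) (Computable.const true)) hxe
    exact Computable₂.mk (this.of_eq fun x => by
      cases h1 : g (wordOf x.1.2 x.2) <;> cases h2 : e x.1.1 (wordOf x.1.2 x.2) <;>
        simp [h1, h2])
  have hb : Computable fun p : ℕ × ℕ => 2 ^ p.2 :=
    (pow2_primrec.comp Primrec.snd).to_comp
  exact Computable₂.mk (bexists_comp hp hb)

def dZ (g₁ g₂ : Word → Bool) (e₁ e₂ : ℕ → Word → Bool) (k m : ℕ) : Bool :=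
  bif Nat.bodd k then dfun g₂ e₂ (k / 2) m else dfun g₁ e₁ (k / 2) m

theorem dZ_comp {g₁ g₂ : Word → Bool} {e₁ e₂ : ℕ → Word → Bool}
    (hg₁ : Computable g₁) (hg₂ : Computable g₂)
    (he₁ : Computable₂ e₁) (he₂ : Computable₂ e₂) :
    Computable₂ (dZ g₁ g₂ e₁ e₂) := by
  have hdiv : Computable fun p : ℕ × ℕ => p.1 / 2 :=
    (Primrec.nat_div.comp Primrec.fst (Primrec.const 2)).to_comp
  exact Computable₂.mk (Computable.cond
    ((Primrec.nat_bodd.comp Primrec.fst).to_comp)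
    ((dfun_comp hg₂ he₂).comp hdiv Computable.snd)
    ((dfun_comp hg₁ he₁).comp hdiv Computable.snd))

end UDiag

namespace UDiag

def zstep (D : ℕ → ℕ → Bool) (n : ℕ) (p : ℕ × ℕ) : ℕ × ℕ :=
  bif bexists (fun m => decide (p.2 ≤ m) && D p.1 m) (n + 1) then (p.1 + 1, n + 1) else p

def zstate (D : ℕ → ℕ → Bool) : ℕ → ℕ × ℕ
  | 0 => (0, 0)
  | n + 1 => zstep D n (zstate D n)

def zf (D : ℕ → ℕ → Bool) (n : ℕ) : ℕ := (zstate D n).1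

theorem zf_zero (D : ℕ → ℕ → Bool) : zf D 0 = 0 := rfl

theorem zstate_snd_le (D : ℕ → ℕ → Bool) : ∀ n, (zstate D n).2 ≤ n := by
  intro n
  induction n with
  | zero => exact le_refl 0
  | succ n ih =>
    show (zstep D n (zstate D n)).2 ≤ n + 1
    rw [zstep]
    cases hb : bexists (fun m => decide ((zstate D n).2 ≤ m) && D (zstate D n).1 m) (n + 1) <;>
      simp <;> omega

theorem zstate_succ_true {D : ℕ → ℕ → Bool} {n : ℕ}
    (h : bexists (fun m => decide ((zstate D n).2 ≤ m) && D (zstate D n).1 m) (n + 1) = true) :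
    zstate D (n + 1) = ((zstate D n).1 + 1, n + 1) := by
  show zstep D n (zstate D n) = _
  rw [zstep, h, cond_true]

theorem zstate_succ_false {D : ℕ → ℕ → Bool} {n : ℕ}
    (h : bexists (fun m => decide ((zstate D n).2 ≤ m) && D (zstate D n).1 m) (n + 1) = false) :
    zstate D (n + 1) = zstate D n := by
  show zstep D n (zstate D n) = _
  rw [zstep, h, cond_false]

theorem zf_const_zone (D : ℕ → ℕ → Bool) :
    ∀ n m, (zstate D n).2 ≤ m → m ≤ n → zf D m = zf D n := by
  intro n
  induction n with
  | zero => intro m _ h2; interval_cases m; rfl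
  | succ n ih =>
    intro m h1 h2
    cases hb : bexists (fun m => decide ((zstate D n).2 ≤ m) && D (zstate D n).1 m) (n + 1)
    · rw [zstate_succ_false hb] at h1
      show zf D m = (zstate D (n + 1)).1
      rw [zstate_succ_false hb]
      rcases Nat.lt_or_ge m (n + 1) with h' | h'
      · exact ih m h1 (by omega)
      · rw [show m = n + 1 by omega]
        show (zstate D (n + 1)).1 = (zstate D n).1
        rw [zstate_succ_false hb]
    · rw [zstate_succ_true hb] at h1
      simp only [] at h1
      rw [show m = n + 1 by exact le_antisymm h2 h1]

theorem zf_step (D : ℕ → ℕ → Bool) (n : ℕ) :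
    zf D (n + 1) = zf D n ∨
      (zf D (n + 1) = zf D n + 1 ∧ ∃ m, m ≤ n ∧ zf D m = zf D n ∧ D (zf D n) m = true) := by
  cases hb : bexists (fun m => decide ((zstate D n).2 ≤ m) && D (zstate D n).1 m) (n + 1)
  · left
    show (zstate D (n + 1)).1 = _
    rw [zstate_succ_false hb]
    rfl
  · right
    have h1 : zf D (n + 1) = zf D n + 1 := by
      show (zstate D (n + 1)).1 = _
      rw [zstate_succ_true hb]
      rfl
    rw [bexists_iff] at hb
    obtain ⟨m, hm, h⟩ := hb
    simp only [Bool.and_eq_true, decide_eq_true_eq] at h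
    exact ⟨h1, m, by omega, zf_const_zone D n m h.1 (by omega), h.2⟩

theorem zf_fire (D : ℕ → ℕ → Bool) (m : ℕ) (h : D (zf D m) m = true) :
    zf D (m + 1) = zf D m + 1 := by
  have hb : bexists (fun m' => decide ((zstate D m).2 ≤ m') && D (zstate D m).1 m') (m + 1)
      = true := by
    rw [bexists_iff]
    refine ⟨m, by omega, ?_⟩
    rw [Bool.and_eq_true]
    exact ⟨decide_eq_true (zstate_snd_le D m), h⟩
  show (zstate D (m + 1)).1 = _
  rw [zstate_succ_true hb]
  rfl

theorem zf_progress (D : ℕ → ℕ → Bool) (HD : ∀ k s, ∃ m, s ≤ m ∧ D k m = true) (n : ℕ) :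
    ∃ t, n ≤ t ∧ zf D t = zf D n ∧ zf D (t + 1) = zf D n + 1 := by
  obtain ⟨m, hm, hD⟩ := HD (zf D n) n
  by_contra hcon
  push_neg at hcon
  have hconst : ∀ t, n ≤ t → t ≤ m → zf D t = zf D n := by
    intro t
    induction t with
    | zero => intro h _; rw [Nat.le_zero] at h; rw [← h]
    | succ t ih =>
      intro h1 h2
      rcases Nat.lt_or_ge n (t + 1) with h' | h'
      · have ht : zf D t = zf D n := ih (by omega) (by omega)
        rcases zf_step D t with hs | ⟨hs, _⟩
        · rw [hs, ht]
        · exact absurd (hs.trans (by rw [ht])) (hcon t (by omega) ht)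
      · rw [show t + 1 = n by omega]
  have hm' : zf D m = zf D n := hconst m hm le_rfl
  have := zf_fire D m (by rw [hm']; exact hD)
  rw [hm'] at this
  exact hcon m hm hm' this

theorem zf_hits (D : ℕ → ℕ → Bool) (HD : ∀ k s, ∃ m, s ≤ m ∧ D k m = true) (k : ℕ) :
    ∃ n, zf D n = k := by
  induction k with
  | zero => exact ⟨0, rfl⟩
  | succ k ih =>
    obtain ⟨n, hn⟩ := ih
    obtain ⟨t, _, _, ht⟩ := zf_progress D HD n
    exact ⟨t + 1, by rw [ht, hn]⟩

theorem zf_diag (D : ℕ → ℕ → Bool) (HD : ∀ k s, ∃ m, s ≤ m ∧ D k m = true) (k : ℕ) :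
    ∃ m, zf D m = k ∧ D k m = true := by
  obtain ⟨n, hn⟩ := zf_hits D HD k
  obtain ⟨t, _, ht, ht1⟩ := zf_progress D HD n
  rcases zf_step D t with hs | ⟨_, m, _, hm1, hm2⟩
  · rw [ht1, ht] at hs; omega
  · rw [ht, hn] at hm1 hm2
    exact ⟨m, hm1, hm2⟩

theorem zf_comp {D : ℕ → ℕ → Bool} (hD : Computable₂ D) : Computable (zf D) := by
  have hp : Computable₂ fun (x : ℕ × (ℕ × ℕ)) (m : ℕ) =>
      decide (x.2.2 ≤ m) && D x.2.1 m := by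
    have hc : Computable fun y : (ℕ × (ℕ × ℕ)) × ℕ => decide (y.1.2.2 ≤ y.2) :=
      (Primrec.nat_le.comp (Primrec.snd.comp (Primrec.snd.comp Primrec.fst))
        Primrec.snd).decide.to_comp
    have hDc : Computable fun y : (ℕ × (ℕ × ℕ)) × ℕ => D y.1.2.1 y.2 :=
      hD.comp (Computable.fst.comp (Computable.snd.comp Computable.fst)) Computable.snd
    have := Computable.cond hc hDc (Computable.const false)
    exact Computable₂.mk (this.of_eq fun y => by
      cases h : decide (y.1.2.2 ≤ y.2) <;> simp [h])
  have hcond : Computable fun x : ℕ × (ℕ × ℕ) =>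
      bexists (fun m => decide (x.2.2 ≤ m) && D x.2.1 m) (x.1 + 1) :=
    bexists_comp hp (Computable.succ.comp Computable.fst)
  have hstep : Computable₂ fun (n : ℕ) (p : ℕ × ℕ) => zstep D n p := by
    have hth : Computable fun x : ℕ × (ℕ × ℕ) => ((x.2.1 + 1, x.1 + 1) : ℕ × ℕ) :=
      Computable.pair (Computable.succ.comp (Computable.fst.comp Computable.snd))
        (Computable.succ.comp Computable.fst)
    have := Computable.cond hcond hth Computable.snd
    exact Computable₂.mk (this.of_eq fun x => by rw [zstep])
  have hzs : Computable (zstate D) := by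
    have h2 : Computable₂ fun (_ : ℕ) (q : ℕ × (ℕ × ℕ)) => zstep D q.1 q.2 :=
      (hstep.comp (Computable.fst.comp Computable.snd)
        (Computable.snd.comp Computable.snd)).to₂
    have := Computable.nat_rec Computable.id (Computable.const ((0, 0) : ℕ × ℕ)) h2
    refine this.of_eq fun n => ?_
    induction n with
    | zero => rfl
    | succ n ih => simp only [zstate, ← ih]; rfl
  exact Computable.fst.comp hzs

end UDiag

namespace UDiag

theorem diff_infinite_lengths {g : Word → Bool} {e : ℕ → Word → Bool} (i : ℕ)
    (hinf : ¬ {w : Word | g w ≠ e i w}.Finite) (s : ℕ) :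
    ∃ m, s ≤ m ∧ dfun g e i m = true := by
  have hfin : {w : Word | w.length < s}.Finite := List.finite_length_lt Bool s
  have hns : ¬ {w : Word | g w ≠ e i w} ⊆ {w : Word | w.length < s} :=
    fun hsub => hinf (hfin.subset hsub)
  obtain ⟨w, hw, hlen⟩ := Set.not_subset.mp hns
  simp only [Set.mem_setOf_eq, not_lt] at hlen
  exact ⟨w.length, hlen, (dfun_iff g e i w.length).mpr ⟨w, rfl, hw⟩⟩

theorem diff_not_finite {C : Set Lang} {A : Lang} {g : Word → Bool} {e : ℕ → Word → Bool}
    (hA : A = {w | g w = true}) (i : ℕ) (hL : {w | e i w = true} ∈ C)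
    (hV : ∀ A B : Lang, A ∈ C → (symmDiff A B).Finite → B ∈ C) (hnA : A ∉ C) :
    ¬ {w : Word | g w ≠ e i w}.Finite := by
  intro hfin
  apply hnA
  apply hV {w | e i w = true} A hL
  refine hfin.subset ?_
  intro w hw
  rw [Set.mem_symmDiff] at hw
  simp only [hA, Set.mem_setOf_eq] at hw ⊢
  rcases hw with ⟨h1, h2⟩ | ⟨h1, h2⟩ <;> simp_all

end UDiag

/-- Weakened Uniform Diagonalization Theorem: the reduction is merely computable. -/
theorem uniform_diagonalization_computable
    (C₁ C₂ : Set Lang) (A₁ A₂ : Lang)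
    (hdec₁ : ∀ L ∈ C₁, DecidableLang L) (hdec₂ : ∀ L ∈ C₂, DecidableLang L)
    (hP₁ : RecPresentable C₁) (hP₂ : RecPresentable C₂)
    (hV₁ : ClosedFinVariants C₁) (hV₂ : ClosedFinVariants C₂)
    (hA₁ : DecidableLang A₁) (hA₂ : DecidableLang A₂)
    (h₁ : A₁ ∉ C₁) (h₂ : A₂ ∉ C₂) :
    ∃ A : Lang, A ∉ C₁ ∧ A ∉ C₂ ∧
      ∃ f : Word → Word, Computable f ∧ ∀ x, x ∈ A ↔ f x ∈ DisjUnion A₁ A₂ := by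
  obtain ⟨g₁, hg₁c, hg₁⟩ := hA₁
  obtain ⟨g₂, hg₂c, hg₂⟩ := hA₂
  obtain ⟨e₁, he₁c, he₁⟩ := hP₁
  obtain ⟨e₂, he₂c, he₂⟩ := hP₂
  set D := UDiag.dZ g₁ g₂ e₁ e₂ with hDdef
  have HD : ∀ k s, ∃ m, s ≤ m ∧ D k m = true := by
    intro k s
    cases hb : Nat.bodd k
    · have hinf := UDiag.diff_not_finite hg₁ (k / 2) (by rw [he₁]; exact ⟨k / 2, rfl⟩) hV₁ h₁
      obtain ⟨m, hm, hd⟩ := UDiag.diff_infinite_lengths (k / 2) hinf s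
      exact ⟨m, hm, by simp [hDdef, UDiag.dZ, hb, hd]⟩
    · have hinf := UDiag.diff_not_finite hg₂ (k / 2) (by rw [he₂]; exact ⟨k / 2, rfl⟩) hV₂ h₂
      obtain ⟨m, hm, hd⟩ := UDiag.diff_infinite_lengths (k / 2) hinf s
      exact ⟨m, hm, by simp [hDdef, UDiag.dZ, hb, hd]⟩
  have hzdiag := UDiag.zf_diag D HD
  set A : Lang := {w : Word | (bif Nat.bodd (UDiag.zf D w.length) then g₂ w else g₁ w) = true}
    with hAdef
  refine ⟨A, ?_, ?_, ?_⟩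
  · intro hmem
    rw [he₁] at hmem
    obtain ⟨i, hAi⟩ := hmem
    obtain ⟨m, hzm, hdm⟩ := hzdiag (2 * i)
    have hb : Nat.bodd (2 * i) = false := by simp
    have hdi : UDiag.dfun g₁ e₁ i m = true := by
      have h2i : 2 * i / 2 = i := by omega
      simpa [hDdef, UDiag.dZ, hb, h2i] using hdm
    obtain ⟨w, hwl, hwne⟩ := (UDiag.dfun_iff _ _ _ _).mp hdi
    have hmemA : w ∈ A ↔ g₁ w = true := by
      simp only [hAdef, Set.mem_setOf_eq, hwl, hzm, hb, cond_false]
    have hmemE : w ∈ A ↔ e₁ i w = true := Set.ext_iff.mp hAi w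
    apply hwne
    cases hg : g₁ w <;> cases he : e₁ i w <;> simp_all
  · intro hmem
    rw [he₂] at hmem
    obtain ⟨i, hAi⟩ := hmem
    obtain ⟨m, hzm, hdm⟩ := hzdiag (2 * i + 1)
    have hb : Nat.bodd (2 * i + 1) = true := by simp
    have hdi : UDiag.dfun g₂ e₂ i m = true := by
      have h2i : (2 * i + 1) / 2 = i := by omega
      simpa [hDdef, UDiag.dZ, hb, h2i] using hdm
    obtain ⟨w, hwl, hwne⟩ := (UDiag.dfun_iff _ _ _ _).mp hdi
    have hmemA : w ∈ A ↔ g₂ w = true := by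
      simp only [hAdef, Set.mem_setOf_eq, hwl, hzm, hb, cond_true]
    have hmemE : w ∈ A ↔ e₂ i w = true := Set.ext_iff.mp hAi w
    apply hwne
    cases hg : g₂ w <;> cases he : e₂ i w <;> simp_all
  · refine ⟨fun x => Nat.bodd (UDiag.zf D x.length) :: x, ?_, ?_⟩
    · have hzc : Computable (UDiag.zf D) := UDiag.zf_comp (UDiag.dZ_comp hg₁c hg₂c he₁c he₂c)
      exact Computable.list_cons.comp
        ((Primrec.nat_bodd.to_comp).comp (hzc.comp Computable.list_length)) (Computable.id)
    · intro x
      have hxA : x ∈ A ↔ (bif Nat.bodd (UDiag.zf D x.length) then g₂ x else g₁ x) = true :=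
        Iff.rfl
      cases hb : Nat.bodd (UDiag.zf D x.length)
      · rw [hb, cond_false] at hxA
        rw [hxA]
        simp [DisjUnion, hg₁, hg₂, hb]
      · rw [hb, cond_true] at hxA
        rw [hxA]
        simp [DisjUnion, hg₁, hg₂, hb]
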